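/- For G = SO(n) acting on ℝⁿ by rotations, the quotient distance is d_Q([x],[y]) = | ‖x‖ − ‖y‖ |, the map s([x]) = ‖x‖·v for a fixed unit vector v is a congruent section, and for the generative model Y = Φ·t₀ + σε the consistency bias equals | E(‖Y‖) − ‖t₀‖ |. -/

import Mathlib

open MeasureTheory ProbabilityTheory RealInnerProductSpace

/-- The rotation group `SO(n)`. -/
abbrev SOn (n : ℕ) := Matrix.specialOrthogonalGroup (Fin n) ℝ

/-- The natural action of `SO(n)` on `ℝⁿ`. -/
noncomputable def soAct {n : ℕ} (R : SOn n) (x : EuclideanSpace ℝ (Fin n)) :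
    EuclideanSpace ℝ (Fin n) :=
  (EuclideanSpace.equiv (Fin n) ℝ).symm
    ((R : Matrix (Fin n) (Fin n) ℝ).mulVec (EuclideanSpace.equiv (Fin n) ℝ x))

/-! Rotations act by isometries and, for `n ≥ 2`, transitively on every sphere about the origin
(a product of two hyperplane reflections, the second fixing the target, has determinant one).
Hence the orbit of `y` meets the ray through `x` at distance `‖y‖`, so the quotient distance is
`|‖x‖ - ‖y‖|`. The Fréchet functional is then `m ↦ E (‖m‖ - ‖Y‖)²`
`= (‖m‖ - E ‖Y‖)² + Var ‖Y‖`, so every Fréchet mean has norm `E ‖Y‖`. -/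

open Matrix Module Submodule

section Reflections

variable {F : Type*} [NormedAddCommGroup F] [InnerProductSpace ℝ F] [FiniteDimensional ℝ F]

theorem det_reflection_orthogonal_span_singleton {v : F} (hv : v ≠ 0) :
    LinearMap.det ((ℝ ∙ v)ᗮ.reflection.toLinearEquiv : F →ₗ[ℝ] F) = -1 := by
  rw [det_reflection, orthogonal_orthogonal, finrank_span_singleton hv, pow_one]

theorem exists_ne_zero_inner_eq_zero (hF : 2 ≤ finrank ℝ F) (w : F) :
    ∃ z : F, z ≠ 0 ∧ ⟪w, z⟫ = 0 := by
  have hpos : 0 < finrank ℝ (ℝ ∙ w)ᗮ := by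
    have hsum := finrank_add_finrank_orthogonal (ℝ ∙ w)
    have hline := finrank_span_le_card (R := ℝ) ({w} : Set F)
    rw [Set.toFinset_singleton, Finset.card_singleton] at hline
    omega
  obtain ⟨z, hz⟩ := finrank_pos_iff_exists_ne_zero.1 hpos
  exact ⟨z, by simpa using hz, mem_orthogonal_singleton_iff_inner_right.1 z.2⟩

theorem exists_linearIsometryEquiv_det_eq_one_apply_eq (hF : 2 ≤ finrank ℝ F) {x w : F}
    (h : ‖x‖ = ‖w‖) :
    ∃ f : F ≃ₗᵢ[ℝ] F, LinearMap.det (f.toLinearEquiv : F →ₗ[ℝ] F) = 1 ∧ f x = w := by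
  rcases eq_or_ne x w with rfl | hxw
  · exact ⟨LinearIsometryEquiv.refl ℝ F, by simp, rfl⟩
  obtain ⟨z, hz, hwz⟩ := exists_ne_zero_inner_eq_zero hF w
  refine ⟨(ℝ ∙ (x - w))ᗮ.reflection.trans (ℝ ∙ z)ᗮ.reflection, ?_, ?_⟩
  · rw [LinearIsometryEquiv.toLinearEquiv_trans, LinearEquiv.coe_trans, LinearMap.det_comp,
      det_reflection_orthogonal_span_singleton hz,
      det_reflection_orthogonal_span_singleton (sub_ne_zero.2 hxw)]
    norm_num
  · rw [LinearIsometryEquiv.trans_apply, reflection_sub h]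
    exact reflection_mem_subspace_eq_self (mem_orthogonal_singleton_iff_inner_left.2 hwz)

end Reflections

section Rotations

variable {n : ℕ}

theorem norm_soAct (R : SOn n) (x : EuclideanSpace ℝ (Fin n)) : ‖soAct R x‖ = ‖x‖ := by
  have hR : (R : Matrix (Fin n) (Fin n) ℝ) ∈ unitary (Matrix (Fin n) (Fin n) ℝ) :=
    (mem_specialOrthogonalGroup_iff.1 R.2).1
  exact ContinuousLinearMap.norm_map_of_mem_unitary
    (Unitary.map_mem (toEuclideanCLM (n := Fin n) (𝕜 := ℝ)) hR) x

theorem exists_soAct_eq_of_det_eq_one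
    (f : EuclideanSpace ℝ (Fin n) ≃ₗᵢ[ℝ] EuclideanSpace ℝ (Fin n))
    (hf : LinearMap.det (f.toLinearEquiv :
      EuclideanSpace ℝ (Fin n) →ₗ[ℝ] EuclideanSpace ℝ (Fin n)) = 1) :
    ∃ R : SOn n, ∀ x, soAct R x = f x := by
  set M := (toEuclideanCLM (n := Fin n) (𝕜 := ℝ)).symm
    (f : EuclideanSpace ℝ (Fin n) →L[ℝ] EuclideanSpace ℝ (Fin n))
  have hM : toEuclideanLin M = (f.toLinearEquiv :
      EuclideanSpace ℝ (Fin n) →ₗ[ℝ] EuclideanSpace ℝ (Fin n)) := by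
    rw [← coe_toEuclideanCLM_eq_toEuclideanLin, StarAlgEquiv.apply_symm_apply]; rfl
  refine ⟨⟨M, mem_specialOrthogonalGroup_iff.2 ⟨?_, ?_⟩⟩, fun x => congr($hM x)⟩
  · have hfu : (f : EuclideanSpace ℝ (Fin n) →L[ℝ] EuclideanSpace ℝ (Fin n)) ∈
        unitary (EuclideanSpace ℝ (Fin n) →L[ℝ] EuclideanSpace ℝ (Fin n)) :=
      (Unitary.linearIsometryEquiv.symm f).2
    exact Unitary.map_mem (toEuclideanCLM (n := Fin n) (𝕜 := ℝ)).symm hfu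
  · rw [← hf, ← hM, toEuclideanLin_eq_toLin_orthonormal, LinearMap.det_toLin]

theorem exists_soAct_eq (hn : 2 ≤ n) {x w : EuclideanSpace ℝ (Fin n)} (h : ‖x‖ = ‖w‖) :
    ∃ R : SOn n, soAct R x = w := by
  obtain ⟨f, hf, hfx⟩ := exists_linearIsometryEquiv_det_eq_one_apply_eq
    (by rwa [finrank_euclideanSpace_fin]) h
  obtain ⟨R, hR⟩ := exists_soAct_eq_of_det_eq_one f hf
  exact ⟨R, (hR x).trans hfx⟩

theorem abs_norm_sub_norm_le_norm_sub_soAct (R : SOn n) (x y : EuclideanSpace ℝ (Fin n)) :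
    |‖x‖ - ‖y‖| ≤ ‖x - soAct R y‖ := by
  simpa only [norm_soAct] using abs_norm_sub_norm_le x (soAct R y)

theorem exists_norm_sub_soAct_eq (hn : 2 ≤ n) (x y : EuclideanSpace ℝ (Fin n)) :
    ∃ R : SOn n, ‖x - soAct R y‖ = |‖x‖ - ‖y‖| := by
  rcases eq_or_ne x 0 with rfl | hx
  · exact ⟨1, by simp [norm_soAct]⟩
  have hx' : ‖x‖ ≠ 0 := norm_ne_zero_iff.2 hx
  obtain ⟨R, hR⟩ := exists_soAct_eq hn (x := y) (w := (‖y‖ / ‖x‖) • x) (by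
    rw [norm_smul, Real.norm_of_nonneg (by positivity), div_mul_cancel₀ _ hx'])
  have hsub : x - (‖y‖ / ‖x‖) • x = (1 - ‖y‖ / ‖x‖) • x := by rw [sub_smul, one_smul]
  refine ⟨R, ?_⟩
  rw [hR, hsub, norm_smul, Real.norm_eq_abs, one_sub_div hx', abs_div, abs_norm,
    div_mul_cancel₀ _ hx']

theorem iInf_norm_sub_soAct_pow (hn : 2 ≤ n) (x y : EuclideanSpace ℝ (Fin n)) (k : ℕ) :
    ⨅ R : SOn n, ‖x - soAct R y‖ ^ k = |‖x‖ - ‖y‖| ^ k := by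
  obtain ⟨R₀, hR₀⟩ := exists_norm_sub_soAct_eq hn x y
  refine IsLeast.csInf_eq ⟨⟨R₀, by dsimp only; rw [hR₀]⟩, Set.forall_mem_range.2 fun R => ?_⟩
  exact pow_le_pow_left₀ (abs_nonneg _) (abs_norm_sub_norm_le_norm_sub_soAct R x y) k

theorem iInf_norm_sub_soAct (hn : 2 ≤ n) (x y : EuclideanSpace ℝ (Fin n)) :
    ⨅ R : SOn n, ‖x - soAct R y‖ = |‖x‖ - ‖y‖| := by
  simpa using iInf_norm_sub_soAct_pow hn x y 1

end Rotations

theorem integral_const_sub_sq {Ω : Type*} [MeasurableSpace Ω] {μ : Measure Ω}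
    [IsProbabilityMeasure μ] {X : Ω → ℝ} (hX : Integrable X μ)
    (hX2 : Integrable (fun ω => X ω ^ 2) μ) (a : ℝ) :
    ∫ ω, (a - X ω) ^ 2 ∂μ = (a - ∫ ω, X ω ∂μ) ^ 2 + (∫ ω, X ω ^ 2 ∂μ - (∫ ω, X ω ∂μ) ^ 2) := by
  have hexpand : (fun ω => (a - X ω) ^ 2) = fun ω => a ^ 2 - 2 * a * X ω + X ω ^ 2 := by
    ext ω; ring
  have hlin : Integrable (fun ω => a ^ 2 - 2 * a * X ω) μ :=
    (integrable_const _).sub (hX.const_mul _)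
  rw [hexpand, integral_add hlin hX2,
    integral_sub (integrable_const _) (hX.const_mul _), integral_const, integral_const_mul,
    probReal_univ, one_smul]
  ring

theorem stmt17_general {n : ℕ} (hn : 2 ≤ n)
    {Ω : Type*} [MeasureSpace Ω] [IsProbabilityMeasure (ℙ : Measure Ω)]
    (t₀ : EuclideanSpace ℝ (Fin n)) (σ : ℝ)
    (Φ : Ω → SOn n) (ε : Ω → EuclideanSpace ℝ (Fin n))
    (v : EuclideanSpace ℝ (Fin n)) (hv : ‖v‖ = 1)
    (hY1 : Integrable (fun ω => ‖soAct (Φ ω) t₀ + σ • ε ω‖))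
    (hY2 : Integrable (fun ω => ‖soAct (Φ ω) t₀ + σ • ε ω‖ ^ 2)) :
    (∀ x y : EuclideanSpace ℝ (Fin n),
      (⨅ R : SOn n, ‖x - soAct R y‖) = |‖x‖ - ‖y‖|) ∧
    (∀ x : EuclideanSpace ℝ (Fin n), ∃ R : SOn n, soAct R x = ‖x‖ • v) ∧
    (∀ x y : EuclideanSpace ℝ (Fin n),
      ‖(‖x‖ • v : EuclideanSpace ℝ (Fin n)) - ‖y‖ • v‖ =
        ⨅ R : SOn n, ‖x - soAct R y‖) ∧
    (∀ mstar : EuclideanSpace ℝ (Fin n),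
      (∀ x, (∫ ω, ⨅ R : SOn n,
            ‖mstar - soAct R (soAct (Φ ω) t₀ + σ • ε ω)‖ ^ 2) ≤
          ∫ ω, ⨅ R : SOn n, ‖x - soAct R (soAct (Φ ω) t₀ + σ • ε ω)‖ ^ 2) →
      (⨅ R : SOn n, ‖t₀ - soAct R mstar‖) =
        |(∫ ω, ‖soAct (Φ ω) t₀ + σ • ε ω‖) - ‖t₀‖|) := by
  have hnorm_smul_v (r : ℝ) : ‖r • v‖ = |r| := by rw [norm_smul, hv, mul_one, Real.norm_eq_abs]
  refine ⟨iInf_norm_sub_soAct hn, fun x => exists_soAct_eq hn (by rw [hnorm_smul_v, abs_norm]),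
    fun x y => by rw [iInf_norm_sub_soAct hn, ← sub_smul, hnorm_smul_v], fun mstar hmin => ?_⟩
  set Y := fun ω => soAct (Φ ω) t₀ + σ • ε ω
  set m := ∫ ω, ‖Y ω‖
  have hfrechet (x : EuclideanSpace ℝ (Fin n)) :
      ∫ ω, ⨅ R : SOn n, ‖x - soAct R (Y ω)‖ ^ 2 =
        (‖x‖ - m) ^ 2 + ((∫ ω, ‖Y ω‖ ^ 2) - m ^ 2) := by
    simp only [iInf_norm_sub_soAct_pow hn, sq_abs]
    exact integral_const_sub_sq hY1 hY2 ‖x‖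
  have hle := hmin (m • v)
  rw [hfrechet, hfrechet, hnorm_smul_v, abs_of_nonneg (integral_nonneg fun _ => norm_nonneg _),
    sub_self] at hle
  have hmstar : ‖mstar‖ = m := by nlinarith [sq_nonneg (‖mstar‖ - m)]
  rw [iInf_norm_sub_soAct hn, hmstar, abs_sub_comm]

/-- For `SO(n)` acting on `ℝⁿ` by rotations: the quotient distance equals
`|‖x‖ - ‖y‖|`; `s([x]) = ‖x‖·v` (for a fixed unit vector `v`) is a congruent
section; and in the generative model `Y = Φ·t₀ + σε` the consistency bias of
any Fréchet mean equals `|E(‖Y‖) - ‖t₀‖|`. -/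
theorem stmt17 {n : ℕ} (hn : 2 ≤ n)
    {Ω : Type*} [MeasureSpace Ω] [IsProbabilityMeasure (ℙ : Measure Ω)]
    (t₀ : EuclideanSpace ℝ (Fin n)) (σ : ℝ)
    (Φ : Ω → SOn n) (ε : Ω → EuclideanSpace ℝ (Fin n))
    (hint : Integrable ε) (hmean : (∫ ω, ε ω) = 0)
    (v : EuclideanSpace ℝ (Fin n)) (hv : ‖v‖ = 1)
    (hY1 : Integrable (fun ω => ‖soAct (Φ ω) t₀ + σ • ε ω‖))
    (hY2 : Integrable (fun ω => ‖soAct (Φ ω) t₀ + σ • ε ω‖ ^ 2))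
    (hFint : ∀ x : EuclideanSpace ℝ (Fin n),
      Integrable (fun ω =>
        ⨅ R : SOn n, ‖x - soAct R (soAct (Φ ω) t₀ + σ • ε ω)‖ ^ 2)) :
    (∀ x y : EuclideanSpace ℝ (Fin n),
      (⨅ R : SOn n, ‖x - soAct R y‖) = |‖x‖ - ‖y‖|) ∧
    (∀ x : EuclideanSpace ℝ (Fin n), ∃ R : SOn n, soAct R x = ‖x‖ • v) ∧
    (∀ x y : EuclideanSpace ℝ (Fin n),
      ‖(‖x‖ • v : EuclideanSpace ℝ (Fin n)) - ‖y‖ • v‖ =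
        ⨅ R : SOn n, ‖x - soAct R y‖) ∧
    (∀ mstar : EuclideanSpace ℝ (Fin n),
      (∀ x, (∫ ω, ⨅ R : SOn n,
            ‖mstar - soAct R (soAct (Φ ω) t₀ + σ • ε ω)‖ ^ 2) ≤
          ∫ ω, ⨅ R : SOn n, ‖x - soAct R (soAct (Φ ω) t₀ + σ • ε ω)‖ ^ 2) →
      (⨅ R : SOn n, ‖t₀ - soAct R mstar‖) =
        |(∫ ω, ‖soAct (Φ ω) t₀ + σ • ε ω‖) - ‖t₀‖|) :=
  stmt17_general hn t₀ σ Φ ε v hv hY1 hY2
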